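/- arXiv:2308.01361 — 10 statements merged into one kernel-verified Lean document; each statement's English description precedes it below -/
import Mathlib

section
/- Let k ≥ 2 and let V be a finite set with at least two elements. Define the lifted BQO relaxation set R^y_BQO as the set of pairs (x, y) where x : V → Fin k → ℝ satisfies 0 ≤ x_{vj} ≤ 1, Σ_j x_{vj} = 1 for each v, and y : V × V → ℝ satisfies y_{uv} = 1 − Σ_j x_{uj} x_{vj} for all u ≠ v; define the V-MILO relaxation set R_{V-MILO} as the set of pairs (x, y) with 0 ≤ x_{vj} ≤ 1, Σ_j x_{vj} = 1, 0 ≤ y_{uv} ≤ 1, and for all u ≠ v and all j: x_{uj} − x_{vj} ≤ y_{uv}, x_{vj} − x_{uj} ≤ y_{uv}, and x_{uj} + x_{vj} + y_{uv} ≤ 2. Then R^y_BQO is strictly contained in R_{V-MILO}: every element of R^y_BQO lies in R_{V-MILO}, and there exists an element of R_{V-MILO} not in R^y_BQO. -/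
/-- The lifted continuous relaxation of the BQO formulation of the max `k`-cut
problem is strictly contained in the continuous relaxation of the V-MILO
formulation (Theorem 2). -/
theorem bqo_relaxation_ssubset_vmilo_relaxation (k : ℕ) (hk : 2 ≤ k)
    (V : Type*) [Fintype V] (hV : 2 ≤ Fintype.card V) :
    {p : (V → Fin k → ℝ) × (V × V → ℝ) |
        (∀ v j, 0 ≤ p.1 v j ∧ p.1 v j ≤ 1) ∧
        (∀ v, ∑ j, p.1 v j = 1) ∧
        (∀ u v : V, u ≠ v → p.2 (u, v) = 1 - ∑ j, p.1 u j * p.1 v j)} ⊂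
    {p : (V → Fin k → ℝ) × (V × V → ℝ) |
        (∀ v j, 0 ≤ p.1 v j ∧ p.1 v j ≤ 1) ∧
        (∀ v, ∑ j, p.1 v j = 1) ∧
        (∀ u v : V, u ≠ v → 0 ≤ p.2 (u, v) ∧ p.2 (u, v) ≤ 1) ∧
        (∀ u v : V, u ≠ v → ∀ j,
          p.1 u j - p.1 v j ≤ p.2 (u, v) ∧
          p.1 v j - p.1 u j ≤ p.2 (u, v) ∧
          p.1 u j + p.1 v j + p.2 (u, v) ≤ 2)} := by
  constructor
  · rintro ⟨x, y⟩ ⟨hx, hs, hy⟩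
    have key : ∀ u v : V, u ≠ v →
        (0 ≤ ∑ j, x u j * x v j) ∧ (∑ j, x u j * x v j ≤ 1) ∧
        (∀ j, x u j * (1 - x v j) ≤ 1 - ∑ j, x u j * x v j) ∧
        (∀ j, x u j * x v j ≤ ∑ j, x u j * x v j) := by
      intro u v huv
      have h0 : (0:ℝ) ≤ ∑ j, x u j * x v j :=
        Finset.sum_nonneg fun j _ => mul_nonneg (hx u j).1 (hx v j).1
      refine ⟨h0, ?_, ?_, ?_⟩
      · calc ∑ j, x u j * x v j ≤ ∑ j, x v j :=
              Finset.sum_le_sum fun j _ => by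
                nlinarith [(hx u j).1, (hx u j).2, (hx v j).1, (hx v j).2]
          _ = 1 := hs v
      · intro j
        have h1 : x u j * (1 - x v j) ≤ ∑ l, x u l * (1 - x v l) :=
          Finset.single_le_sum (f := fun l => x u l * (1 - x v l))
            (fun l _ => mul_nonneg (hx u l).1 (by linarith [(hx v l).2]))
            (Finset.mem_univ j)
        have h2 : ∑ l, x u l * (1 - x v l)
            = (∑ l, x u l) - ∑ l, x u l * x v l := by
          rw [← Finset.sum_sub_distrib]
          exact Finset.sum_congr rfl fun l _ => by ring
        rw [hs u] at h2
        linarith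
      · intro j
        exact Finset.single_le_sum (f := fun l => x u l * x v l)
          (fun l _ => mul_nonneg (hx u l).1 (hx v l).1) (Finset.mem_univ j)
    refine ⟨hx, hs, ?_, ?_⟩
    · intro u v huv
      obtain ⟨h0, h1, _, _⟩ := key u v huv
      rw [hy u v huv]
      constructor <;> linarith
    · intro u v huv j
      obtain ⟨h0, h1, h3, h4⟩ := key u v huv
      obtain ⟨h0', h1', h3', h4'⟩ := key v u (Ne.symm huv)
      have e : ∑ l, x v l * x u l = ∑ l, x u l * x v l :=
        Finset.sum_congr rfl fun l _ => mul_comm _ _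
      rw [hy u v huv]
      refine ⟨?_, ?_, ?_⟩
      · nlinarith [h3 j, (hx u j).1, (hx u j).2, (hx v j).1, (hx v j).2]
      · have := h3' j
        rw [e] at this
        nlinarith [(hx u j).1, (hx u j).2, (hx v j).1, (hx v j).2]
      · nlinarith [h4 j, (hx u j).1, (hx u j).2, (hx v j).1, (hx v j).2]
  · -- strictness witness
    intro hsub
    obtain ⟨u, v, huv⟩ := Fintype.exists_pair_of_one_lt_card (α := V) (by omega)
    set j0 : Fin k := ⟨0, by omega⟩ with hj0
    set j1 : Fin k := ⟨1, by omega⟩ with hj1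
    have hne : j0 ≠ j1 := by simp [hj0, hj1, Fin.ext_iff]
    obtain ⟨x, hxdef⟩ : ∃ x : V → Fin k → ℝ, x = fun _ j =>
        (if j = j0 then (1:ℝ)/2 else 0) + (if j = j1 then (1:ℝ)/2 else 0) :=
      ⟨_, rfl⟩
    have hxb : ∀ w j, 0 ≤ x w j ∧ x w j ≤ 1 := by
      intro w j
      simp only [hxdef]
      constructor <;> split <;> split <;> norm_num
    have hxs : ∀ w, ∑ j, x w j = 1 := by
      intro w
      simp only [hxdef]
      rw [Finset.sum_add_distrib, Finset.sum_ite_eq' Finset.univ j0,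
        Finset.sum_ite_eq' Finset.univ j1]
      simp
      norm_num
    have hmem : (⟨x, fun _ => (1:ℝ)⟩ : (V → Fin k → ℝ) × (V × V → ℝ)) ∈
        {p : (V → Fin k → ℝ) × (V × V → ℝ) |
        (∀ v j, 0 ≤ p.1 v j ∧ p.1 v j ≤ 1) ∧
        (∀ v, ∑ j, p.1 v j = 1) ∧
        (∀ u v : V, u ≠ v → p.2 (u, v) = 1 - ∑ j, p.1 u j * p.1 v j)} :=
      hsub ⟨hxb, hxs, fun a b hab => ⟨by norm_num, le_refl 1⟩, by
        intro a b hab j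
        have hhalf : ∀ w, x w j ≤ 1/2 := by
          intro w
          simp only [hxdef]
          rcases eq_or_ne j j0 with h0 | h0
          · subst h0; simp [hne]
          · simp only [h0, if_false]; split <;> norm_num
        have h1 := hxb a j
        have h2 := hxb b j
        have hsum : x a j + x b j ≤ 1 := by
          have := hhalf a; have := hhalf b; linarith
        show x a j - x b j ≤ 1 ∧ x b j - x a j ≤ 1 ∧ x a j + x b j + 1 ≤ 2
        refine ⟨by linarith, by linarith, by linarith⟩⟩
    obtain ⟨_, _, hy⟩ := hmem
    have h := hy u v huv
    have hxj0 : x u j0 = 1/2 ∧ x v j0 = 1/2 := by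
      constructor <;> simp [hxdef, hne]
    have hlb : (1:ℝ)/4 ≤ ∑ j, x u j * x v j := by
      have hh := Finset.single_le_sum (f := fun l => x u l * x v l)
        (fun l _ => mul_nonneg (hxb u l).1 (hxb v l).1) (Finset.mem_univ j0)
      calc (1:ℝ)/4 = x u j0 * x v j0 := by rw [hxj0.1, hxj0.2]; norm_num
        _ ≤ _ := hh
    simp only [] at h
    linarith
end

section
/- Let k ≥ 2, let V be a finite set, let E be a set of unordered pairs of distinct elements of V, and let w : E → ℝ be edge weights. The maximum of Σ_{{u,v} ∈ E} w_{uv} y_{uv} over the V-MILO relaxation polytope — i.e., over all (x, y) with x : V → Fin k → ℝ, y : E → ℝ, satisfying 0 ≤ x_{vj} ≤ 1, Σ_j x_{vj} = 1 for each v, 0 ≤ y_{uv} ≤ 1, and for every edge {u,v} ∈ E and every j: x_{uj} − x_{vj} ≤ y_{uv}, x_{vj} − x_{uj} ≤ y_{uv}, and x_{uj} + x_{vj} + y_{uv} ≤ 2 — equals Σ_{{u,v} ∈ E} max{w_{uv}, 0}. -/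
/-- The optimal objective value of the continuous relaxation of the V-MILO
formulation of the max `k`-cut problem equals `∑_{{u,v} ∈ E} max(w_{uv}, 0)`
(Remark 3). -/
theorem vmilo_relaxation_optimal_value (k : ℕ) (hk : 2 ≤ k)
    (V : Type*) [Fintype V] (E : Finset (Sym2 V)) (hE : ∀ e ∈ E, ¬ e.IsDiag)
    (w : Sym2 V → ℝ) :
    IsGreatest
      {t : ℝ | ∃ (x : V → Fin k → ℝ) (y : Sym2 V → ℝ),
        (∀ v j, 0 ≤ x v j ∧ x v j ≤ 1) ∧
        (∀ v, ∑ j, x v j = 1) ∧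
        (∀ e ∈ E, 0 ≤ y e ∧ y e ≤ 1) ∧
        (∀ u v : V, s(u, v) ∈ E → ∀ j,
          x u j - x v j ≤ y s(u, v) ∧
          x v j - x u j ≤ y s(u, v) ∧
          x u j + x v j + y s(u, v) ≤ 2) ∧
        t = ∑ e ∈ E, w e * y e}
      (∑ e ∈ E, max (w e) 0) := by
  have hk0 : (0 : ℝ) < k := by positivity
  constructor
  · refine ⟨fun _ _ => 1 / k, fun e => if 0 ≤ w e then 1 else 0, ?_, ?_, ?_, ?_, ?_⟩
    · intro v j
      constructor
      · positivity
      · rw [div_le_one hk0]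
        exact_mod_cast Nat.one_le_of_lt hk
    · intro v
      simp only [Finset.sum_const, Finset.card_univ, Fintype.card_fin, nsmul_eq_mul]
      field_simp
    · intro e _
      simp only []; split <;> norm_num
    · intro u v he j
      have h1 : (if 0 ≤ w s(u,v) then (1:ℝ) else 0) ≤ 1 := by split <;> norm_num
      have h0 : (0:ℝ) ≤ if 0 ≤ w s(u,v) then (1:ℝ) else 0 := by split <;> norm_num
      refine ⟨by simpa using h0, by simpa using h0, ?_⟩
      have : (1:ℝ)/k + 1/k ≤ 1 := by
        rw [← add_div, div_le_one hk0]
        exact_mod_cast hk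
      linarith
    · refine Finset.sum_congr rfl fun e _ => ?_
      rcases le_or_gt 0 (w e) with h | h
      · simp [h, max_eq_left h]
      · simp [not_le.mpr h, max_eq_right h.le]
  · rintro t ⟨x, y, hx, hxs, hy, hc, rfl⟩
    refine Finset.sum_le_sum fun e he => ?_
    obtain ⟨hy0, hy1⟩ := hy e he
    rcases le_or_gt 0 (w e) with h | h
    · calc w e * y e ≤ w e * 1 := by nlinarith
        _ ≤ max (w e) 0 := by simp [le_max_left]
    · calc w e * y e ≤ 0 := by nlinarith
        _ ≤ max (w e) 0 := le_max_right _ _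
end

section
/- Let k ≥ 1 be an integer, V a finite set, and x : V → Fin k → ℝ a fractional assignment (0 ≤ x_{vj} ≤ 1 and Σ_j x_{vj} = 1 for each v). Define z_{uv} := Σ_j x_{uj} x_{vj} for u, v ∈ V. Then for every three distinct vertices u, v, w ∈ V, the triangle inequality z_{uv} + z_{vw} ≤ 1 + z_{uw} holds. -/
/-- For a fractional assignment `x` and the lifted same-partition variables
`z_{uv} = ∑_j x_{uj} x_{vj}`, the triangle inequality
`z_{uv} + z_{vw} ≤ 1 + z_{uw}` holds for distinct vertices `u, v, w`. -/
theorem bqo_z_triangle_inequality (k : ℕ) (hk : 1 ≤ k) (V : Type*) [Fintype V]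
    (x : V → Fin k → ℝ)
    (hx0 : ∀ v j, 0 ≤ x v j) (hx1 : ∀ v j, x v j ≤ 1)
    (hsum : ∀ v, ∑ j, x v j = 1)
    (u v w : V) (huv : u ≠ v) (hvw : v ≠ w) (huw : u ≠ w) :
    (∑ j, x u j * x v j) + (∑ j, x v j * x w j) ≤ 1 + ∑ j, x u j * x w j := by
  have key : ∀ j : Fin k, x u j * x v j + x v j * x w j ≤ x v j + x u j * x w j := by
    intro j
    nlinarith [hx0 u j, hx0 v j, hx0 w j, hx1 u j, hx1 v j, hx1 w j,
      mul_nonneg (sub_nonneg.mpr (hx1 u j)) (sub_nonneg.mpr (hx1 w j)),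
      mul_nonneg (mul_nonneg (hx0 u j) (hx0 w j)) (sub_nonneg.mpr (hx1 v j))]
  calc (∑ j, x u j * x v j) + (∑ j, x v j * x w j)
      = ∑ j, (x u j * x v j + x v j * x w j) := (Finset.sum_add_distrib).symm
    _ ≤ ∑ j, (x v j + x u j * x w j) := Finset.sum_le_sum (fun j _ => key j)
    _ = (∑ j, x v j) + ∑ j, x u j * x w j := Finset.sum_add_distrib
    _ = 1 + ∑ j, x u j * x w j := by rw [hsum v]
end

section
/- Let k ≥ 1 be an integer, V a finite set, and x : V → Fin k → ℝ a fractional assignment (0 ≤ x_{vj} ≤ 1 and Σ_j x_{vj} = 1 for each v). Define z_{uv} := Σ_j x_{uj} x_{vj}. Then for every subset Q ⊆ V with |Q| = k + 1, one has Σ_{{u,v}} z_{uv} ≥ 1, where the sum runs over all unordered pairs of distinct elements of Q. -/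
/-- Sum of squares is at most square of sum for nonnegative reals. -/
lemma aux_sq_sum {V : Type*} (T : Finset V) (f : V → ℝ)
    (h0 : ∀ v ∈ T, 0 ≤ f v) :
    ∑ v ∈ T, (f v)^2 ≤ (∑ v ∈ T, f v)^2 := by
  have hs : 0 ≤ ∑ v ∈ T, f v := Finset.sum_nonneg h0
  calc ∑ v ∈ T, (f v)^2 ≤ ∑ v ∈ T, f v * (∑ w ∈ T, f w) := by
        refine Finset.sum_le_sum fun v hv => ?_
        rw [sq]
        exact mul_le_mul_of_nonneg_left
          (Finset.single_le_sum h0 hv) (h0 v hv)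
    _ = (∑ v ∈ T, f v)^2 := by rw [← Finset.sum_mul, sq]

/-- Key single-color inequality. -/
lemma aux_key {V : Type*} [DecidableEq V] (T : Finset V) (f : V → ℝ)
    (h0 : ∀ v ∈ T, 0 ≤ f v) (h1 : ∀ v ∈ T, f v ≤ 1) :
    2 * (∑ v ∈ T, f v) - 2 ≤ (∑ v ∈ T, f v)^2 - ∑ v ∈ T, (f v)^2 := by
  induction T using Finset.induction_on with
  | empty => norm_num
  | @insert a T ha IH =>
    have h0' : ∀ v ∈ T, 0 ≤ f v := fun v hv => h0 v (Finset.mem_insert_of_mem hv)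
    have h1' : ∀ v ∈ T, f v ≤ 1 := fun v hv => h1 v (Finset.mem_insert_of_mem hv)
    have IH' := IH h0' h1'
    have hqs := aux_sq_sum T f h0'
    have ht0 : 0 ≤ f a := h0 a (Finset.mem_insert_self a T)
    have ht1 : f a ≤ 1 := h1 a (Finset.mem_insert_self a T)
    rw [Finset.sum_insert ha, Finset.sum_insert ha]
    set t := f a
    set s := ∑ v ∈ T, f v
    set q := ∑ v ∈ T, (f v)^2
    rcases le_or_gt 1 s with hs | hs
    · nlinarith
    · nlinarith

/-- For a fractional assignment `x` into `k` parts and the lifted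
same-partition variables `z_{uv} = ∑_j x_{uj} x_{vj}`, every `(k+1)`-element
subset `Q` of `V` satisfies the clique inequality
`∑_{{u,v} ⊆ Q, u ≠ v} z_{uv} ≥ 1`, where the sum runs over all unordered
pairs of distinct elements of `Q`. -/
theorem bqo_z_clique_inequality (k : ℕ) (hk : 1 ≤ k) (V : Type*) [Fintype V]
    [DecidableEq V] (x : V → Fin k → ℝ)
    (hx0 : ∀ v j, 0 ≤ x v j) (hx1 : ∀ v j, x v j ≤ 1)
    (hsum : ∀ v, ∑ j, x v j = 1)
    (Q : Finset V) (hQ : Q.card = k + 1) :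
    1 ≤ ∑ e ∈ Q.sym2.filter (fun e => ¬ e.IsDiag),
          Sym2.lift ⟨fun u v => ∑ j, x u j * x v j,
            fun u v => Finset.sum_congr rfl fun j _ => mul_comm _ _⟩ e := by
  letI : LinearOrder V := LinearOrder.lift' (Fintype.equivFin V) (Fintype.equivFin V).injective
  have hrw : ∑ e ∈ Q.sym2.filter (fun e => ¬ e.IsDiag),
      Sym2.lift ⟨fun u v => ∑ j, x u j * x v j,
        fun u v => Finset.sum_congr rfl fun j _ => mul_comm _ _⟩ e
      = ∑ i ∈ Q.offDiag.filter (fun i => i.1 < i.2), ∑ j, x i.1 j * x i.2 j := by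
    have h := Finset.sum_sym2_filter_not_isDiag Q
      (fun e => Sym2.lift ⟨fun u v => ∑ j, x u j * x v j,
        fun u v => Finset.sum_congr rfl fun j _ => mul_comm _ _⟩ e)
    simp only [Sym2.lift_mk] at h
    convert h using 2 <;> congr!
  set F : V → V → ℝ := fun u v => ∑ j, x u j * x v j with hF
  -- the sum over the filtered offDiag
  have hsymm : ∀ u v, F u v = F v u := fun u v =>
    Finset.sum_congr rfl fun j _ => mul_comm _ _
  have hdouble :
      ∑ i ∈ Q.offDiag, F i.1 i.2
        = 2 * ∑ i ∈ Q.offDiag.filter (fun i => i.1 < i.2), F i.1 i.2 := by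
    have hsplit : Q.offDiag = Q.offDiag.filter (fun i => i.1 < i.2)
        ∪ Q.offDiag.filter (fun i => i.2 < i.1) := by
      ext ⟨u, v⟩
      simp only [Finset.mem_union, Finset.mem_filter, Finset.mem_offDiag]
      constructor
      · rintro ⟨hu, hv, hne⟩
        rcases lt_or_gt_of_ne hne with h | h
        · exact Or.inl ⟨⟨hu, hv, hne⟩, h⟩
        · exact Or.inr ⟨⟨hu, hv, hne⟩, h⟩
      · rintro (⟨h, _⟩ | ⟨h, _⟩) <;> exact h
    have hdisj : Disjoint (Q.offDiag.filter (fun i => i.1 < i.2))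
        (Q.offDiag.filter (fun i => i.2 < i.1)) := by
      exact Finset.disjoint_filter.mpr fun i _ h1 h2 => absurd h2 (not_lt.mpr (le_of_lt h1))
    have hswap : ∑ i ∈ Q.offDiag.filter (fun i => i.2 < i.1), F i.1 i.2
        = ∑ i ∈ Q.offDiag.filter (fun i => i.1 < i.2), F i.1 i.2 := by
      refine Finset.sum_nbij' (fun i => (i.2, i.1)) (fun i => (i.2, i.1)) ?_ ?_ ?_ ?_ ?_
      · rintro ⟨u, v⟩ h
        simp only [Finset.mem_filter, Finset.mem_offDiag] at h ⊢
        exact ⟨⟨h.1.2.1, h.1.1, (Ne.symm h.1.2.2)⟩, h.2⟩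
      · rintro ⟨u, v⟩ h
        simp only [Finset.mem_filter, Finset.mem_offDiag] at h ⊢
        exact ⟨⟨h.1.2.1, h.1.1, (Ne.symm h.1.2.2)⟩, h.2⟩
      · rintro ⟨u, v⟩ _; rfl
      · rintro ⟨u, v⟩ _; rfl
      · rintro ⟨u, v⟩ _; exact hsymm u v
    nth_rewrite 1 [hsplit]
    rw [Finset.sum_union hdisj, hswap]; ring
  -- compute the offDiag sum per color
  have hoff : ∑ i ∈ Q.offDiag, F i.1 i.2
      = ∑ j, ((∑ v ∈ Q, x v j)^2 - ∑ v ∈ Q, (x v j)^2) := by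
    have hfull : ∑ i ∈ Q ×ˢ Q, F i.1 i.2
        = ∑ i ∈ Q.diag, F i.1 i.2 + ∑ i ∈ Q.offDiag, F i.1 i.2 := by
      rw [← Finset.diag_union_offDiag Q,
        Finset.sum_union (Finset.disjoint_diag_offDiag Q)]
    have hdiag : ∑ i ∈ Q.diag, F i.1 i.2 = ∑ j, ∑ v ∈ Q, (x v j)^2 := by
      have h1 : ∑ i ∈ Q.diag, F i.1 i.2 = ∑ u ∈ Q, F u u := by
        refine Finset.sum_nbij' (fun i => i.1) (fun u => (u, u)) ?_ ?_ ?_ ?_ ?_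
        · rintro ⟨u, v⟩ h
          exact (Finset.mem_diag.mp h).1
        · intro u hu; exact Finset.mem_diag.mpr ⟨hu, rfl⟩
        · rintro ⟨u, v⟩ h
          obtain ⟨_, h2⟩ := Finset.mem_diag.mp h
          exact Prod.ext rfl h2
        · intro u hu; rfl
        · rintro ⟨u, v⟩ h
          obtain ⟨_, h2⟩ := Finset.mem_diag.mp h
          rw [show v = u from h2.symm]
      rw [h1, Finset.sum_comm]
      exact Finset.sum_congr rfl fun j _ => Finset.sum_congr rfl fun u _ => (sq (x u j)).symm
    have hfull2 : ∑ i ∈ Q ×ˢ Q, F i.1 i.2 = ∑ j, (∑ v ∈ Q, x v j)^2 := by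
      rw [Finset.sum_product]
      have h1 : ∀ u, ∑ v ∈ Q, F u v = ∑ j, x u j * (∑ v ∈ Q, x v j) := by
        intro u
        rw [Finset.sum_comm]
        exact Finset.sum_congr rfl fun j _ => (Finset.mul_sum _ _ _).symm
      simp_rw [h1]
      rw [Finset.sum_comm]
      refine Finset.sum_congr rfl fun j _ => ?_
      rw [← Finset.sum_mul, sq]
    have := hfull
    rw [hfull2, hdiag] at this
    have : ∑ i ∈ Q.offDiag, F i.1 i.2
        = ∑ j, (∑ v ∈ Q, x v j)^2 - ∑ j, ∑ v ∈ Q, (x v j)^2 := by linarith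
    rw [this, ← Finset.sum_sub_distrib]
  -- per-color bound
  have hkey : ∀ j : Fin k, 2 * (∑ v ∈ Q, x v j) - 2
      ≤ (∑ v ∈ Q, x v j)^2 - ∑ v ∈ Q, (x v j)^2 :=
    fun j => aux_key Q (fun v => x v j) (fun v _ => hx0 v j) (fun v _ => hx1 v j)
  have hcolsum : ∑ j : Fin k, ∑ v ∈ Q, x v j = (k : ℝ) + 1 := by
    rw [Finset.sum_comm]
    simp only [hsum]
    rw [Finset.sum_const, hQ]
    push_cast
    ring
  have hlb : (2 : ℝ) ≤ ∑ i ∈ Q.offDiag, F i.1 i.2 := by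
    rw [hoff]
    calc (2 : ℝ) = ∑ j : Fin k, (2 * (∑ v ∈ Q, x v j) - 2) := by
          rw [Finset.sum_sub_distrib, ← Finset.mul_sum, hcolsum,
            Finset.sum_const, Finset.card_univ, Fintype.card_fin]
          push_cast
          ring
      _ ≤ _ := Finset.sum_le_sum fun j _ => hkey j
  rw [hrw]
  have : ∑ i ∈ Q.offDiag.filter (fun i => i.1 < i.2), ∑ j, x i.1 j * x i.2 j
      = ∑ i ∈ Q.offDiag.filter (fun i => i.1 < i.2), F i.1 i.2 := rfl
  rw [this]
  linarith [hdouble, hlb]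
end

section
/- Let k ≥ 2 and let V be a finite set with |V| > k. Then there is no fractional assignment x : V → Fin k → ℝ (0 ≤ x_{vj} ≤ 1 and Σ_j x_{vj} = 1 for each v) such that Σ_j x_{uj} x_{vj} = 2/(k(k+1)) for all pairs of distinct vertices u, v ∈ V. -/
/-- For `k ≥ 2` and `|V| > k`, there is no fractional assignment
`x : V → Fin k → ℝ` whose lifted same-partition variables satisfy
`∑_j x_{uj} x_{vj} = 2/(k(k+1))` for all pairs of distinct vertices. -/
theorem no_fractional_assignment_constant_z (k : ℕ) (hk : 2 ≤ k)
    (V : Type*) [Fintype V] (hV : k < Fintype.card V) :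
    ¬ ∃ x : V → Fin k → ℝ,
        (∀ v j, 0 ≤ x v j ∧ x v j ≤ 1) ∧
        (∀ v, ∑ j, x v j = 1) ∧
        (∀ u v : V, u ≠ v → ∑ j, x u j * x v j = 2 / (k * (k + 1))) := by
  classical
  rintro ⟨x, hx01, hxsum, hz⟩
  set c : ℝ := 2 / (k * (k + 1)) with hc
  have hkR : (2:ℝ) ≤ k := by exact_mod_cast hk
  have hk0 : (0:ℝ) < k := by linarith
  -- c < 1/k
  have hck : c < 1 / k := by
    rw [hc, div_lt_div_iff₀ (by positivity) hk0]
    nlinarith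
  -- the family x is not linearly independent
  have hnli : ¬ LinearIndependent ℝ x := by
    intro h
    have := h.fintype_card_le_finrank
    rw [Module.finrank_fin_fun] at this
    omega
  obtain ⟨g, hsum0, w0, hw0⟩ := Fintype.not_linearIndependent_iff.mp hnli
  -- coordinatewise
  have hj : ∀ j, ∑ v, g v * x v j = 0 := by
    intro j
    have := congrFun hsum0 j
    simpa [Finset.sum_apply] using this
  have hg0 : ∑ v, g v = 0 := by
    calc ∑ v, g v = ∑ v, g v * ∑ j, x v j := by simp [hxsum]
    _ = ∑ v, ∑ j, g v * x v j := by simp [Finset.mul_sum]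
    _ = ∑ j, ∑ v, g v * x v j := Finset.sum_comm
    _ = 0 := by simp [hj]
  have hgall : ∀ w, g w = 0 := by
    intro w
    have hw : ∑ v, g v * ∑ j, x v j * x w j = 0 := by
      calc ∑ v, g v * ∑ j, x v j * x w j
          = ∑ v, ∑ j, (g v * x v j) * x w j := by
            simp [Finset.mul_sum, mul_assoc]
      _ = ∑ j, ∑ v, (g v * x v j) * x w j := Finset.sum_comm
      _ = ∑ j, (∑ v, g v * x v j) * x w j := by simp [Finset.sum_mul]
      _ = 0 := by simp [hj]
    set S : ℝ := ∑ j, x w j * x w j with hS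
    have hsplit : g w * S + ∑ v ∈ Finset.univ.erase w, g v * c = 0 := by
      rw [← hw, ← Finset.add_sum_erase _ _ (Finset.mem_univ w)]
      congr 1
      exact Finset.sum_congr rfl fun v hv => by
        rw [hz v w (Finset.ne_of_mem_erase hv)]
    have herase : ∑ v ∈ Finset.univ.erase w, g v = -g w := by
      have := Finset.add_sum_erase _ g (Finset.mem_univ w)
      rw [hg0] at this
      linarith
    have hSk : 1 / (k:ℝ) ≤ S := by
      have hcs : (∑ j, x w j) ^ 2 ≤ (Fintype.card (Fin k)) * ∑ j, x w j ^ 2 :=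
        sq_sum_le_card_mul_sum_sq
      rw [hxsum w] at hcs
      simp only [Fintype.card_fin] at hcs
      rw [div_le_iff₀ hk0, hS]
      calc (1:ℝ) = 1 ^ 2 := by ring
      _ ≤ (k:ℝ) * ∑ j, x w j ^ 2 := hcs
      _ = (∑ j, x w j * x w j) * k := by
            rw [mul_comm]; congr 1; exact Finset.sum_congr rfl fun j _ => sq (x w j)
    have hfac : g w * (S - c) = 0 := by
      have : ∑ v ∈ Finset.univ.erase w, g v * c = (-g w) * c := by
        rw [← Finset.sum_mul, herase]
      nlinarith [hsplit]
    have hSc : S - c > 0 := by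
      have : c < S := lt_of_lt_of_le hck hSk
      linarith
    rcases mul_eq_zero.mp hfac with h | h
    · exact h
    · linarith
  exact hw0 (hgall w0)
end

section
/- Let k ≥ 1 and n > k be integers, and let v₁, …, v_n be nonzero vectors in ℝ^k all of whose entries are nonnegative. Then there exist distinct indices a ≠ b such that ⟨v_a, v_b⟩ ≥ (1/√k) · ‖v_a‖₂ · ‖v_b‖₂, i.e., the angle between v_a and v_b is at most arccos(1/√k). -/
open scoped RealInnerProductSpace

/-- Among more than `k` nonzero vectors in the nonnegative orthant of `ℝ^k`,
some pair makes an angle at most `arccos(1/√k)`; equivalently, some pair of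
distinct vectors `v_a, v_b` satisfies `⟨v_a, v_b⟩ ≥ (1/√k) ‖v_a‖ ‖v_b‖`. -/
theorem exists_small_angle_pair_in_nonneg_orthant (k n : ℕ) (hk : 1 ≤ k)
    (hn : k < n) (v : Fin n → EuclideanSpace ℝ (Fin k))
    (hne : ∀ i, v i ≠ 0) (hnonneg : ∀ i j, 0 ≤ v i j) :
    ∃ a b : Fin n, a ≠ b ∧
      1 / Real.sqrt k * (‖v a‖ * ‖v b‖) ≤ ⟪v a, v b⟫ := by
  by_contra hcon
  push_neg at hcon
  have hkR : (0:ℝ) < (k:ℝ) := by exact_mod_cast hk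
  have hkR0 : (k:ℝ) ≠ 0 := ne_of_gt hkR
  -- embed Fin (k+1) into Fin n
  have hkn : k + 1 ≤ n := hn
  set ι : Fin (k+1) → Fin n := fun i => Fin.castLE hkn i with hι
  have hιinj : Function.Injective ι := Fin.castLE_injective hkn
  have hupos : ∀ i : Fin (k+1), (0:ℝ) < ‖v (ι i)‖ := fun i => norm_pos_iff.mpr (hne _)
  -- inner product formula
  have hinner : ∀ a b : EuclideanSpace ℝ (Fin k), ⟪a, b⟫ = ∑ p, a p * b p := by
    intro a b
    rw [PiLp.inner_apply]
    congr 1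
    funext p
    simp [mul_comm]
  have hnormsq : ∀ a : EuclideanSpace ℝ (Fin k), ∑ p, a p * a p = ‖a‖ * ‖a‖ := by
    intro a
    rw [← hinner a a, real_inner_self_eq_norm_mul_norm]
  -- normalized squares
  set W : Fin (k+1) → Fin k → ℝ :=
    fun i p => v (ι i) p * v (ι i) p / (‖v (ι i)‖ * ‖v (ι i)‖) with hW
  have hWsum : ∀ i, ∑ p, W i p = 1 := by
    intro i
    simp only [hW]
    rw [← Finset.sum_div, hnormsq]
    exact div_self (ne_of_gt (mul_pos (hupos i) (hupos i)))
  -- key quantitative bound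
  have key : ∀ i j : Fin (k+1), i ≠ j → ∑ p, W i p * W j p < 1 / (k:ℝ) := by
    intro i j hij
    have hij' : ι i ≠ ι j := fun h => hij (hιinj h)
    have hA : (0:ℝ) < ‖v (ι i)‖ := hupos i
    have hB : (0:ℝ) < ‖v (ι j)‖ := hupos j
    have hinn_nonneg : (0:ℝ) ≤ ⟪v (ι i), v (ι j)⟫ := by
      rw [hinner]
      exact Finset.sum_nonneg fun p _ => mul_nonneg (hnonneg _ _) (hnonneg _ _)
    have hlt := hcon (ι i) (ι j) hij'
    have sqrtk : Real.sqrt k * Real.sqrt k = (k:ℝ) := Real.mul_self_sqrt (le_of_lt hkR)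
    -- step 1 : sum of squares of nonnegatives ≤ square of sum
    have step1 : ∑ p, (v (ι i) p * v (ι j) p) * (v (ι i) p * v (ι j) p)
        ≤ (∑ p, v (ι i) p * v (ι j) p) * (∑ p, v (ι i) p * v (ι j) p) := by
      have h1 : ∀ p ∈ (Finset.univ : Finset (Fin k)),
          (v (ι i) p * v (ι j) p) * (v (ι i) p * v (ι j) p)
          ≤ (v (ι i) p * v (ι j) p) * (∑ q, v (ι i) q * v (ι j) q) := by
        intro p _
        refine mul_le_mul_of_nonneg_left ?_ (mul_nonneg (hnonneg _ _) (hnonneg _ _))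
        exact Finset.single_le_sum (f := fun q => v (ι i) q * v (ι j) q)
          (fun q _ => mul_nonneg (hnonneg _ _) (hnonneg _ _)) (Finset.mem_univ p)
      calc ∑ p, (v (ι i) p * v (ι j) p) * (v (ι i) p * v (ι j) p)
          ≤ ∑ p, (v (ι i) p * v (ι j) p) * (∑ q, v (ι i) q * v (ι j) q) :=
            Finset.sum_le_sum h1
        _ = (∑ p, v (ι i) p * v (ι j) p) * (∑ q, v (ι i) q * v (ι j) q) := by
            rw [← Finset.sum_mul]
    have step2 : (∑ p, v (ι i) p * v (ι j) p) = ⟪v (ι i), v (ι j)⟫ := (hinner _ _).symm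
    have step3 : ⟪v (ι i), v (ι j)⟫ * ⟪v (ι i), v (ι j)⟫
        < 1/(k:ℝ) * ((‖v (ι i)‖ * ‖v (ι j)‖) * (‖v (ι i)‖ * ‖v (ι j)‖)) := by
      have h2 := mul_self_lt_mul_self hinn_nonneg hlt
      have h3 : (1 / Real.sqrt k * (‖v (ι i)‖ * ‖v (ι j)‖))
          * (1 / Real.sqrt k * (‖v (ι i)‖ * ‖v (ι j)‖))
          = 1/(k:ℝ) * ((‖v (ι i)‖ * ‖v (ι j)‖) * (‖v (ι i)‖ * ‖v (ι j)‖)) := by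
        rw [mul_mul_mul_comm, div_mul_div_comm, one_mul, sqrtk]
      rw [h3] at h2
      exact h2
    have hpt : ∀ p, W i p * W j p
        = (v (ι i) p * v (ι j) p) * (v (ι i) p * v (ι j) p)
          / ((‖v (ι i)‖ * ‖v (ι i)‖) * (‖v (ι j)‖ * ‖v (ι j)‖)) := by
      intro p
      simp only [hW]
      rw [div_mul_div_comm]
      ring_nf
    have hDpos : (0:ℝ) < (‖v (ι i)‖ * ‖v (ι i)‖) * (‖v (ι j)‖ * ‖v (ι j)‖) := by positivity
    calc ∑ p, W i p * W j p
        = (∑ p, (v (ι i) p * v (ι j) p) * (v (ι i) p * v (ι j) p))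
          / ((‖v (ι i)‖ * ‖v (ι i)‖) * (‖v (ι j)‖ * ‖v (ι j)‖)) := by
          rw [Finset.sum_congr rfl fun p _ => hpt p, ← Finset.sum_div]
      _ < (1/(k:ℝ) * ((‖v (ι i)‖ * ‖v (ι j)‖) * (‖v (ι i)‖ * ‖v (ι j)‖)))
          / ((‖v (ι i)‖ * ‖v (ι i)‖) * (‖v (ι j)‖ * ‖v (ι j)‖)) := by
          apply (div_lt_div_iff_of_pos_right hDpos).mpr
          calc ∑ p, (v (ι i) p * v (ι j) p) * (v (ι i) p * v (ι j) p)
              ≤ ⟪v (ι i), v (ι j)⟫ * ⟪v (ι i), v (ι j)⟫ := by rw [← step2]; exact step1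
            _ < _ := step3
      _ = 1/(k:ℝ) := by
          have hD : ((‖v (ι i)‖ * ‖v (ι j)‖) * (‖v (ι i)‖ * ‖v (ι j)‖))
              = ((‖v (ι i)‖ * ‖v (ι i)‖) * (‖v (ι j)‖ * ‖v (ι j)‖)) := by ring
          rw [hD, mul_div_assoc, div_self (ne_of_gt hDpos), mul_one]
  -- centered vectors
  set X : Fin (k+1) → Fin k → ℝ := fun i p => W i p - 1/(k:ℝ) with hX
  have hXsum : ∀ i, ∑ p, X i p = 0 := by
    intro i
    simp only [hX]
    rw [Finset.sum_sub_distrib, hWsum i, Finset.sum_const, Finset.card_univ,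
      Fintype.card_fin, nsmul_eq_mul]
    field_simp
    ring
  have hS : ∀ i j : Fin (k+1), i ≠ j → ∑ p, X i p * X j p < 0 := by
    intro i j hij
    have expand : ∑ p, X i p * X j p = (∑ p, W i p * W j p) - 1/(k:ℝ) := by
      have hterm : ∀ p : Fin k, X i p * X j p
          = W i p * W j p - (1/(k:ℝ)) * W i p - (1/(k:ℝ)) * W j p + (1/(k:ℝ)) * (1/(k:ℝ)) := by
        intro p; simp only [hX]; ring
      rw [Finset.sum_congr rfl fun p _ => hterm p]
      rw [Finset.sum_add_distrib, Finset.sum_sub_distrib, Finset.sum_sub_distrib,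
        ← Finset.mul_sum, ← Finset.mul_sum, hWsum i, hWsum j, Finset.sum_const,
        Finset.card_univ, Fintype.card_fin, nsmul_eq_mul]
      field_simp
      ring
    rw [expand]
    have := key i j hij
    linarith
  -- the first k centered vectors are linearly dependent
  set Y : Fin k → (Fin k → ℝ) := fun i => X i.castSucc with hY
  have hYsum : ∀ i, ∑ p, Y i p = 0 := fun i => hXsum _
  have hdep : ¬ LinearIndependent ℝ Y := by
    intro hind
    have hcard : Fintype.card (Fin k) = Module.finrank ℝ (Fin k → ℝ) := by
      simp [Module.finrank_pi]
    have hspan := hind.span_eq_top_of_card_eq_finrank' hcard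
    have hone : (fun _ => (1:ℝ)) ∈ Submodule.span ℝ (Set.range Y) := by
      rw [hspan]; trivial
    obtain ⟨cc, hcc⟩ := (Submodule.mem_span_range_iff_exists_fun ℝ).mp hone
    have e2 : ∑ p : Fin k, (∑ i, cc i • Y i) p = 0 := by
      have hap : ∀ p : Fin k, (∑ i, cc i • Y i) p = ∑ i, cc i * Y i p := by
        intro p
        rw [Finset.sum_apply]
        simp [smul_eq_mul]
      rw [Finset.sum_congr rfl fun p _ => hap p, Finset.sum_comm]
      have hz : ∀ i : Fin k, ∑ p, cc i * Y i p = 0 := by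
        intro i
        rw [← Finset.mul_sum, hYsum i, mul_zero]
      simp [hz]
    rw [hcc] at e2
    have e3 : (k:ℝ) = 0 := by simpa using e2
    exact hkR0 e3
  obtain ⟨g, hgsum, i₀, hgi₀⟩ := Fintype.not_linearIndependent_iff.mp hdep
  -- pointwise form of the dependence
  have hgp : ∀ p : Fin k, ∑ i, g i * Y i p = 0 := by
    intro p
    have := congrFun hgsum p
    rw [Finset.sum_apply] at this
    simpa [smul_eq_mul] using this
  -- one-sided relations are impossible (pair with the last vector)
  have onesided : ∀ h : Fin k → ℝ, (∀ p : Fin k, ∑ i, h i * Y i p = 0) →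
      (∀ i, 0 ≤ h i) → (∃ i, 0 < h i) → False := by
    intro h hrel hpos ⟨i₁, hi₁⟩
    have hT : ∑ i, h i * (∑ p, Y i p * X (Fin.last k) p) = 0 := by
      have : ∀ i : Fin k, h i * (∑ p, Y i p * X (Fin.last k) p)
          = ∑ p, (h i * Y i p) * X (Fin.last k) p := by
        intro i
        rw [Finset.mul_sum]
        exact Finset.sum_congr rfl fun p _ => by ring
      rw [Finset.sum_congr rfl fun i _ => this i, Finset.sum_comm]
      have hz : ∀ p : Fin k, ∑ i, (h i * Y i p) * X (Fin.last k) p = 0 := by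
        intro p
        rw [← Finset.sum_mul, hrel p, zero_mul]
      simp [hz]
    have hneg : ∑ i, h i * (∑ p, Y i p * X (Fin.last k) p) < 0 := by
      have hterm : ∀ i ∈ (Finset.univ : Finset (Fin k)),
          h i * (∑ p, Y i p * X (Fin.last k) p) ≤ 0 := by
        intro i _
        have hSi : ∑ p, Y i p * X (Fin.last k) p < 0 := by
          refine hS i.castSucc (Fin.last k) ?_
          exact ne_of_lt (Fin.castSucc_lt_last i)
        exact mul_nonpos_of_nonneg_of_nonpos (hpos i) (le_of_lt hSi)
      have hstrict : ∃ i ∈ (Finset.univ : Finset (Fin k)),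
          h i * (∑ p, Y i p * X (Fin.last k) p) < 0 := by
        refine ⟨i₁, Finset.mem_univ _, ?_⟩
        have hSi : ∑ p, Y i₁ p * X (Fin.last k) p < 0 := by
          refine hS i₁.castSucc (Fin.last k) ?_
          exact ne_of_lt (Fin.castSucc_lt_last i₁)
        exact mul_neg_of_pos_of_neg hi₁ hSi
      calc ∑ i, h i * (∑ p, Y i p * X (Fin.last k) p)
          < ∑ _i : Fin k, (0:ℝ) := Finset.sum_lt_sum hterm hstrict
        _ = 0 := by simp
    rw [hT] at hneg
    exact lt_irrefl 0 hneg
  -- sign decomposition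
  set P := Finset.univ.filter (fun i : Fin k => 0 < g i) with hPdef
  set N := Finset.univ.filter (fun i : Fin k => g i < 0) with hNdef
  by_cases hPne : P.Nonempty
  · by_cases hNne : N.Nonempty
    · -- both nonempty : positive semidefinite quantity is strictly negative
      have hgz : ∀ x : Fin k, x ∉ P ∪ N → g x = 0 := by
        intro x hx
        rw [Finset.mem_union] at hx
        push_neg at hx
        obtain ⟨hx1, hx2⟩ := hx
        rw [hPdef, Finset.mem_filter] at hx1
        rw [hNdef, Finset.mem_filter] at hx2
        have h1 : ¬ 0 < g x := fun h => hx1 ⟨Finset.mem_univ _, h⟩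
        have h2 : ¬ g x < 0 := fun h => hx2 ⟨Finset.mem_univ _, h⟩
        linarith [not_lt.mp h1, not_lt.mp h2]
      have hdisj : Disjoint P N := by
        rw [Finset.disjoint_left]
        intro x hxP hxN
        rw [hPdef, Finset.mem_filter] at hxP
        rw [hNdef, Finset.mem_filter] at hxN
        linarith [hxP.2, hxN.2]
      have hpoint : ∀ p : Fin k, ∑ i ∈ P, g i * Y i p = ∑ j ∈ N, (-g j) * Y j p := by
        intro p
        have h0 := hgp p
        have hunion : ∑ i ∈ P ∪ N, g i * Y i p = ∑ i, g i * Y i p := by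
          apply Finset.sum_subset (Finset.subset_univ _)
          intro x _ hx
          rw [hgz x hx, zero_mul]
        rw [Finset.sum_union hdisj] at hunion
        have : ∑ i ∈ P, g i * Y i p + ∑ j ∈ N, g j * Y j p = 0 := hunion.trans h0
        have h2 : ∑ i ∈ P, g i * Y i p = - ∑ j ∈ N, g j * Y j p := by linarith
        have h3 : ∑ j ∈ N, (-g j) * Y j p = - ∑ j ∈ N, g j * Y j p := by
          rw [← Finset.sum_neg_distrib]
          exact Finset.sum_congr rfl fun j _ => by ring
        rw [h2, ← h3]
      -- the quantity Q
      have hQnonneg : (0:ℝ) ≤ ∑ p, (∑ i ∈ P, g i * Y i p) * (∑ j ∈ N, (-g j) * Y j p) := by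
        apply Finset.sum_nonneg
        intro p _
        rw [← hpoint p]
        exact mul_self_nonneg _
      have hQneg : ∑ p, (∑ i ∈ P, g i * Y i p) * (∑ j ∈ N, (-g j) * Y j p) < 0 := by
        have hexp : ∑ p, (∑ i ∈ P, g i * Y i p) * (∑ j ∈ N, (-g j) * Y j p)
            = ∑ i ∈ P, ∑ j ∈ N, (g i * (-g j)) * (∑ p, Y i p * Y j p) := by
          have h1 : ∀ p : Fin k, (∑ i ∈ P, g i * Y i p) * (∑ j ∈ N, (-g j) * Y j p)
              = ∑ i ∈ P, ∑ j ∈ N, (g i * (-g j)) * (Y i p * Y j p) := by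
            intro p
            rw [Finset.sum_mul_sum]
            exact Finset.sum_congr rfl fun i _ =>
              Finset.sum_congr rfl fun j _ => by ring
          rw [Finset.sum_congr rfl fun p _ => h1 p]
          rw [Finset.sum_comm]
          refine Finset.sum_congr rfl fun i _ => ?_
          rw [Finset.sum_comm]
          refine Finset.sum_congr rfl fun j _ => ?_
          rw [Finset.mul_sum]
        rw [hexp]
        have houter : ∀ i ∈ P, ∑ j ∈ N, (g i * (-g j)) * (∑ p, Y i p * Y j p) < 0 := by
          intro i hiP
          rw [hPdef, Finset.mem_filter] at hiP
          have hgi : 0 < g i := hiP.2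
          have hin : ∀ j ∈ N, (g i * (-g j)) * (∑ p, Y i p * Y j p) < 0 := by
            intro j hjN
            rw [hNdef, Finset.mem_filter] at hjN
            have hgj : g j < 0 := hjN.2
            have hij : i ≠ j := by
              intro h; rw [h] at hgi; linarith
            have hSij : ∑ p, Y i p * Y j p < 0 := by
              refine hS i.castSucc j.castSucc ?_
              exact fun h => hij (Fin.castSucc_injective k h)
            have hcoef : 0 < g i * (-g j) := mul_pos hgi (by linarith)
            exact mul_neg_of_pos_of_neg hcoef hSij
          calc ∑ j ∈ N, (g i * (-g j)) * (∑ p, Y i p * Y j p)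
              < ∑ _j ∈ N, (0:ℝ) := Finset.sum_lt_sum_of_nonempty hNne hin
            _ = 0 := by simp
        calc ∑ i ∈ P, ∑ j ∈ N, (g i * (-g j)) * (∑ p, Y i p * Y j p)
            < ∑ _i ∈ P, (0:ℝ) := Finset.sum_lt_sum_of_nonempty hPne houter
          _ = 0 := by simp
      linarith
    · -- N empty : all coefficients nonnegative
      have hNempty : N = ∅ := Finset.not_nonempty_iff_eq_empty.mp hNne
      have hpos : ∀ i, 0 ≤ g i := by
        intro i
        by_contra hneg
        push_neg at hneg
        have : i ∈ N := by
          rw [hNdef, Finset.mem_filter]; exact ⟨Finset.mem_univ _, hneg⟩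
        rw [hNempty] at this
        exact absurd this (Finset.notMem_empty i)
      have hex : ∃ i, 0 < g i := by
        refine ⟨i₀, lt_of_le_of_ne (hpos i₀) (Ne.symm hgi₀)⟩
      exact onesided g hgp hpos hex
  · -- P empty : all coefficients nonpositive; use -g
    have hPempty : P = ∅ := Finset.not_nonempty_iff_eq_empty.mp hPne
    have hneg : ∀ i, g i ≤ 0 := by
      intro i
      by_contra hgt
      push_neg at hgt
      have : i ∈ P := by
        rw [hPdef, Finset.mem_filter]; exact ⟨Finset.mem_univ _, hgt⟩
      rw [hPempty] at this
      exact absurd this (Finset.notMem_empty i)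
    have hrel : ∀ p : Fin k, ∑ i, (fun i => -g i) i * Y i p = 0 := by
      intro p
      have h := hgp p
      have h1 : ∑ i, (fun i => -g i) i * Y i p = - ∑ i, g i * Y i p := by
        rw [← Finset.sum_neg_distrib]
        exact Finset.sum_congr rfl fun i _ => by ring
      rw [h1, h, neg_zero]
    have hpos' : ∀ i, 0 ≤ -g i := fun i => neg_nonneg.mpr (hneg i)
    have hex : ∃ i, 0 < -g i := by
      refine ⟨i₀, ?_⟩
      have := lt_of_le_of_ne (hneg i₀) hgi₀
      linarith
    exact onesided (fun i => -g i) hrel hpos' hex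
end

section
/- Let k ≥ 1, let V be a finite set, and let x : V → Fin k → ℝ be a fractional assignment (0 ≤ x_{vj} ≤ 1 and Σ_j x_{vj} = 1 for each v ∈ V). Define the symmetric matrix Z ∈ ℝ^{V×V} by Z_{uv} = Σ_j x_{uj} x_{vj} for u ≠ v and Z_{vv} = 1 (equivalently, Z = D^x + Σ_j x_j x_jᵀ where D^x is diagonal with D^x_{vv} = 1 − Σ_j x_{vj}²). Then: (i) Z_{vv} = 1 for all v; (ii) 0 ≤ Z_{uv} ≤ 1 for all u, v; and (iii) kZ − e eᵀ is positive semidefinite, where e is the all-ones vector. In other words, Z lies in the continuous relaxation of the MISDO-I formulation of the max k-cut problem. -/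
/-!
Writing `X` for the `V × k` matrix of `x`, the matrix `Z` is `D + X Xᵀ` with `D` diagonal,
`D_vv = 1 - ∑_j x_vj² ≥ 0`. Since the rows of `X` sum to one, `e = X 1`, so
`k Z - e eᵀ = k D + X (k I - 1 1ᵀ) Xᵀ`, and `k I - 1 1ᵀ` is positive semidefinite by
Cauchy–Schwarz: `(∑_j y_j)² ≤ k ∑_j y_j²`.
-/

open Matrix Finset

theorem posSemidef_card_smul_one_sub_vecMulVec_one (ι : Type*) [Fintype ι] [DecidableEq ι] :
    ((Fintype.card ι : ℝ) • (1 : Matrix ι ι ℝ) - vecMulVec 1 1).PosSemidef := by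
  refine posSemidef_iff_dotProduct_mulVec.2 ⟨?_, fun y => ?_⟩
  · exact (isHermitian_one.smul (.all _)).sub (.ext fun i j => by simp [vecMulVec_apply])
  · simp only [sub_mulVec, smul_mulVec, one_mulVec, vecMulVec_mulVec, dotProduct_sub,
      dotProduct_smul, star_trivial]
    simpa [dotProduct, sq] using sq_sum_le_card_mul_sum_sq (s := univ) (f := y)

theorem mul_smul_one_sub_vecMulVec_one_mul_transpose {m ι R : Type*} [Fintype ι] [DecidableEq ι]
    [CommRing R] (A : Matrix m ι R) (c : R) :
    A * (c • (1 : Matrix ι ι R) - vecMulVec 1 1) * Aᵀ =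
      c • (A * Aᵀ) - vecMulVec (A *ᵥ 1) (A *ᵥ 1) := by
  rw [Matrix.mul_sub, Matrix.sub_mul, mul_vecMulVec, vecMulVec_mul, Matrix.mul_smul,
    Matrix.mul_one, Matrix.smul_mul, vecMul_transpose]

theorem posSemidef_card_smul_mul_transpose_sub_vecMulVec {m ι : Type*} [Fintype m] [Fintype ι]
    (A : Matrix m ι ℝ) :
    ((Fintype.card ι : ℝ) • (A * Aᵀ) - vecMulVec (A *ᵥ 1) (A *ᵥ 1)).PosSemidef := by
  classical
  rw [← mul_smul_one_sub_vecMulVec_one_mul_transpose]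
  exact (posSemidef_card_smul_one_sub_vecMulVec_one ι).mul_mul_conjTranspose_same A

theorem bqo_lifted_matrix_in_misdo_relaxation_general (k : ℕ)
    (V : Type*) [Fintype V] [DecidableEq V] (x : V → Fin k → ℝ)
    (hx0 : ∀ v j, 0 ≤ x v j) (hx1 : ∀ v j, x v j ≤ 1)
    (hsum : ∀ v, ∑ j, x v j = 1)
    (Z : Matrix V V ℝ)
    (hZ : ∀ u v, Z u v = if u = v then 1 else ∑ j, x u j * x v j) :
    (∀ v, Z v v = 1) ∧
    (∀ u v, 0 ≤ Z u v ∧ Z u v ≤ 1) ∧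
    ((k : ℝ) • Z - Matrix.vecMulVec (1 : V → ℝ) (1 : V → ℝ)).PosSemidef := by
  set X : Matrix V (Fin k) ℝ := .of x
  have hX : ∀ u v, (X * Xᵀ) u v = ∑ j, x u j * x v j := fun _ _ => rfl
  have hgram : ∀ u v, 0 ≤ (X * Xᵀ) u v ∧ (X * Xᵀ) u v ≤ 1 := fun u v => hX u v ▸
    ⟨sum_nonneg fun j _ => mul_nonneg (hx0 u j) (hx0 v j),
      (sum_le_sum fun j _ => mul_le_of_le_one_right (hx0 u j) (hx1 v j)).trans_eq (hsum u)⟩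
  have hZ_eq : Z = diagonal (fun v => 1 - (X * Xᵀ) v v) + X * Xᵀ := by
    ext u v
    rw [hZ]
    by_cases h : u = v <;> simp [h, hX]
  have hrow : X *ᵥ 1 = 1 := funext fun v => by simpa [X, mulVec, dotProduct] using hsum v
  refine ⟨fun v => by simp [hZ], fun u v => ?_, ?_⟩
  · rw [hZ]
    split_ifs
    · norm_num
    · exact hgram u v
  · have hD : (diagonal fun v => 1 - (X * Xᵀ) v v).PosSemidef :=
      .diagonal fun v => sub_nonneg.2 (hgram v v).2
    have hG := posSemidef_card_smul_mul_transpose_sub_vecMulVec X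
    rw [Fintype.card_fin, hrow] at hG
    rw [hZ_eq, smul_add, add_sub_assoc]
    exact (hD.smul k.cast_nonneg).add hG

/-- For a fractional assignment `x`, the lifted matrix `Z` with unit diagonal
and off-diagonal entries `Z_{uv} = ∑_j x_{uj} x_{vj}` lies in the continuous
relaxation of the MISDO-I formulation: it has unit diagonal, entries in
`[0,1]`, and `kZ − e eᵀ` is positive semidefinite (Theorem 3). -/
theorem bqo_lifted_matrix_in_misdo_relaxation (k : ℕ) (hk : 1 ≤ k)
    (V : Type*) [Fintype V] [DecidableEq V] (x : V → Fin k → ℝ)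
    (hx0 : ∀ v j, 0 ≤ x v j) (hx1 : ∀ v j, x v j ≤ 1)
    (hsum : ∀ v, ∑ j, x v j = 1)
    (Z : Matrix V V ℝ)
    (hZ : ∀ u v, Z u v = if u = v then 1 else ∑ j, x u j * x v j) :
    (∀ v, Z v v = 1) ∧
    (∀ u v, 0 ≤ Z u v ∧ Z u v ≤ 1) ∧
    ((k : ℝ) • Z - Matrix.vecMulVec (1 : V → ℝ) (1 : V → ℝ)).PosSemidef :=
  bqo_lifted_matrix_in_misdo_relaxation_general k V x hx0 hx1 hsum Z hZ
end

section
/- Let k ≥ 2, let V be a finite set, and let x : V → Fin k → ℝ be a fractional assignment (0 ≤ x_{vj} ≤ 1 and Σ_j x_{vj} = 1 for each v ∈ V). Define Z̄ := (1/(k−1)) · (k D^x − e eᵀ + k Σ_j x_j x_jᵀ), where D^x is the diagonal matrix with D^x_{vv} = 1 − Σ_j x_{vj}², e is the all-ones vector, and x_j = (x_{vj})_{v∈V}. Then Z̄ is positive semidefinite and Z̄_{vv} = 1 for all v ∈ V; that is, Z̄ lies in the continuous relaxation of the MISDO-II formulation of the max k-cut problem. -/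
open Matrix Finset

lemma vecMulVec_mulVec' {V : Type*} [Fintype V] (w v y : V → ℝ) :
    Matrix.vecMulVec w v *ᵥ y = (v ⬝ᵥ y) • w := by
  ext i
  simp only [Matrix.mulVec, Matrix.vecMulVec_apply, dotProduct, Pi.smul_apply, smul_eq_mul,
    Finset.sum_mul]
  exact Finset.sum_congr rfl fun j _ => by ring

/-- For a fractional assignment `x` into `k ≥ 2` parts, the matrix
`Z̄ = (1/(k−1)) (k Dˣ − e eᵀ + k ∑_j x_j x_jᵀ)`, where `Dˣ` is the diagonal
matrix with `Dˣ_{vv} = 1 − ∑_j x_{vj}²`, is positive semidefinite and has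
unit diagonal; i.e., `Z̄` lies in the continuous relaxation of the MISDO-II
formulation of the max `k`-cut problem. -/
theorem bqo_lifted_matrix_in_misdo2_relaxation (k : ℕ) (hk : 2 ≤ k)
    (V : Type*) [Fintype V] [DecidableEq V] (x : V → Fin k → ℝ)
    (hx0 : ∀ v j, 0 ≤ x v j) (hx1 : ∀ v j, x v j ≤ 1)
    (hsum : ∀ v, ∑ j, x v j = 1) :
    (((k : ℝ) - 1)⁻¹ •
        ((k : ℝ) • Matrix.diagonal (fun v => 1 - ∑ j, (x v j) ^ 2)
          - Matrix.vecMulVec (1 : V → ℝ) (1 : V → ℝ)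
          + (k : ℝ) • ∑ j, Matrix.vecMulVec (fun v => x v j) (fun v => x v j))).PosSemidef
    ∧
    ∀ v : V, (((k : ℝ) - 1)⁻¹ •
        ((k : ℝ) • Matrix.diagonal (fun v => 1 - ∑ j, (x v j) ^ 2)
          - Matrix.vecMulVec (1 : V → ℝ) (1 : V → ℝ)
          + (k : ℝ) • ∑ j, Matrix.vecMulVec (fun v => x v j) (fun v => x v j))) v v = 1 := by
  have hk2 : (2:ℝ) ≤ (k:ℝ) := by exact_mod_cast hk
  have hk1 : (0:ℝ) < (k:ℝ) - 1 := by linarith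
  set M : Matrix V V ℝ :=
    ((k : ℝ) • Matrix.diagonal (fun v => 1 - ∑ j, (x v j) ^ 2)
      - Matrix.vecMulVec (1 : V → ℝ) (1 : V → ℝ)
      + (k : ℝ) • ∑ j, Matrix.vecMulVec (fun v => x v j) (fun v => x v j)) with hM
  -- entrywise formula
  have hentry : ∀ i j : V, M i j =
      (k:ℝ) * (if i = j then 1 - ∑ l, (x i l)^2 else 0) - 1
        + (k:ℝ) * ∑ l, x i l * x j l := by
    intro i j
    simp [hM, Matrix.add_apply, Matrix.sub_apply, Matrix.smul_apply, Matrix.sum_apply,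
      Matrix.vecMulVec_apply, Matrix.diagonal_apply, Finset.mul_sum, smul_eq_mul]
  -- symmetry
  have hsymm : M.IsHermitian := by
    show Mᴴ = M
    ext i j
    rw [Matrix.conjTranspose_apply, star_trivial, hentry, hentry]
    by_cases h : i = j
    · subst h; simp
    · have h' : ¬ j = i := fun hh => h hh.symm
      simp only [h, h', if_false]
      have hcomm : ∑ l, x j l * x i l = ∑ l, x i l * x j l :=
        Finset.sum_congr rfl fun l _ => mul_comm _ _
      rw [hcomm]
  -- quadratic form
  have hq : ∀ y : V → ℝ, (0:ℝ) ≤ y ⬝ᵥ M *ᵥ y := by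
    intro y
    have h1 : y ⬝ᵥ (Matrix.diagonal (fun v => 1 - ∑ j, (x v j) ^ 2)) *ᵥ y
        = ∑ v, (1 - ∑ j, (x v j)^2) * (y v)^2 := by
      simp only [dotProduct, Matrix.mulVec_diagonal]
      exact Finset.sum_congr rfl fun v _ => by ring
    have h2 : y ⬝ᵥ (Matrix.vecMulVec (1 : V → ℝ) (1 : V → ℝ)) *ᵥ y = (∑ v, y v)^2 := by
      rw [vecMulVec_mulVec', dotProduct_smul]
      simp only [dotProduct, Pi.one_apply, smul_eq_mul, one_mul, mul_one, sq]
    have h3 : y ⬝ᵥ (∑ j, Matrix.vecMulVec (fun v => x v j) (fun v => x v j)) *ᵥ y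
        = ∑ j, (∑ v, x v j * y v)^2 := by
      have hmv : (∑ j, Matrix.vecMulVec (fun v => x v j) (fun v => x v j)) *ᵥ y
          = ∑ j, (Matrix.vecMulVec (fun v => x v j) (fun v => x v j)) *ᵥ y := by
        ext i
        simp [Matrix.mulVec, dotProduct, Matrix.sum_apply, Finset.sum_mul]
        rw [Finset.sum_comm]
      have hds : ∀ (f : Fin k → V → ℝ), y ⬝ᵥ (∑ j, f j) = ∑ j, y ⬝ᵥ f j := by
        intro f
        simp only [dotProduct, Finset.sum_apply, Finset.mul_sum]
        exact Finset.sum_comm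
      rw [hmv, hds]
      refine Finset.sum_congr rfl fun j _ => ?_
      rw [vecMulVec_mulVec', dotProduct_smul]
      simp only [dotProduct, smul_eq_mul, sq]
      congr 1
      exact Finset.sum_congr rfl fun v _ => mul_comm _ _
    have expand : y ⬝ᵥ M *ᵥ y
        = (k:ℝ) * (∑ v, (1 - ∑ j, (x v j)^2) * (y v)^2)
          - (∑ v, y v)^2 + (k:ℝ) * ∑ j, (∑ v, x v j * y v)^2 := by
      rw [hM, Matrix.add_mulVec, Matrix.sub_mulVec, Matrix.smul_mulVec,
        Matrix.smul_mulVec, dotProduct_add, dotProduct_sub, dotProduct_smul,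
        dotProduct_smul, h1, h2, h3, smul_eq_mul, smul_eq_mul]
    rw [expand]
    have hA : (0:ℝ) ≤ (k:ℝ) * (∑ v, (1 - ∑ j, (x v j)^2) * (y v)^2) := by
      apply mul_nonneg (by positivity)
      apply Finset.sum_nonneg
      intro v _
      apply mul_nonneg _ (sq_nonneg _)
      have hle : ∑ j, (x v j)^2 ≤ ∑ j, x v j := by
        apply Finset.sum_le_sum
        intro j _
        nlinarith [hx0 v j, hx1 v j]
      rw [hsum v] at hle
      linarith
    have hsumy : ∑ v, y v = ∑ j, ∑ v, x v j * y v := by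
      rw [Finset.sum_comm]
      refine Finset.sum_congr rfl fun v _ => ?_
      rw [← Finset.sum_mul, hsum v, one_mul]
    have hCS : (∑ j, ∑ v, x v j * y v)^2 ≤ (k:ℝ) * ∑ j, (∑ v, x v j * y v)^2 := by
      have := sq_sum_le_card_mul_sum_sq (s := (Finset.univ : Finset (Fin k)))
        (f := fun j : Fin k => ∑ v, x v j * y v)
      simpa using this
    rw [hsumy]
    linarith
  have hMpsd : M.PosSemidef := Matrix.posSemidef_iff_dotProduct_mulVec.2 ⟨hsymm, fun y => by simpa using hq y⟩
  constructor
  · refine Matrix.posSemidef_iff_dotProduct_mulVec.2 ⟨?_, ?_⟩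
    · show (((k:ℝ)-1)⁻¹ • M)ᴴ = ((k:ℝ)-1)⁻¹ • M
      ext i j
      rw [Matrix.conjTranspose_apply, star_trivial, Matrix.smul_apply, Matrix.smul_apply]
      congr 1
      conv_lhs => rw [← hsymm.eq]
      rw [Matrix.conjTranspose_apply, star_trivial]
    · intro y
      rw [Matrix.smul_mulVec, dotProduct_smul, smul_eq_mul]
      exact mul_nonneg (by positivity) (by simpa using hq y)
  · intro v
    have : M v v = (k:ℝ) - 1 := by
      rw [hentry v v]
      simp only [if_pos rfl]
      have : ∑ l, x v l * x v l = ∑ l, (x v l)^2 :=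
        Finset.sum_congr rfl fun l _ => (sq (x v l)).symm ▸ by ring
      rw [this]
      simp only [if_true]
      ring
    rw [Matrix.smul_apply, this, smul_eq_mul, inv_mul_cancel₀ (ne_of_gt hk1)]
end

section
/- Let k ≥ 1 be an integer, let V be a finite set, let E be a set of unordered pairs of distinct elements of V, and let w : E → ℝ be edge weights. Consider the objective f(x) = Σ_{{u,v} ∈ E} w_{uv} (1 − Σ_{j} x_{uj} x_{vj}) over the continuous relaxation set Δ = { x : V → Fin k → ℝ : 0 ≤ x_{vj} ≤ 1 and Σ_j x_{vj} = 1 for each v }. Then the maximum of f over Δ is attained at a binary point: there exists x* ∈ Δ with x*_{vj} ∈ {0,1} for all v, j such that f(x*) ≥ f(x) for all x ∈ Δ. Consequently, the optimal value of the continuous relaxation of the BQO formulation of the max k-cut problem equals the optimal value of the BQO formulation itself. -/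
/-- The lifted same-partition value `∑_j x_{uj} x_{vj}` of an unordered pair,
as a function on `Sym2 V`. -/
noncomputable def samePartitionVal {V : Type*} [Fintype V] {k : ℕ}
    (x : V → Fin k → ℝ) : Sym2 V → ℝ :=
  Sym2.lift ⟨fun u v => ∑ j, x u j * x v j,
    fun u v => Finset.sum_congr rfl fun j _ => mul_comm _ _⟩

namespace BqoAux

lemma spv_mk {V : Type*} [Fintype V] {k : ℕ} (x : V → Fin k → ℝ) (u v : V) :
    samePartitionVal x s(u, v) = ∑ j, x u j * x v j := rfl

def indf {k : ℕ} (j : Fin k) : Fin k → ℝ := fun i => if i = j then 1 else 0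

lemma indf_sum {k : ℕ} (j : Fin k) : ∑ i, indf j i = 1 := by simp [indf]

lemma indf_dot {k : ℕ} (j : Fin k) (y : Fin k → ℝ) :
    ∑ i, indf j i * y i = y j := by simp [indf, ite_mul]

lemma indf_dot' {k : ℕ} (j : Fin k) (y : Fin k → ℝ) :
    ∑ i, y i * indf j i = y j := by simp [indf, mul_ite]

variable {V : Type*} [Fintype V] [DecidableEq V] {k : ℕ}

/-- Edge-level decomposition. -/
lemma spv_update (x : V → Fin k → ℝ) (a : V) (hsum : ∑ j, x a j = 1)
    (e : Sym2 V) (he : ¬ e.IsDiag) :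
    ∑ j, x a j * samePartitionVal (Function.update x a (indf j)) e
      = samePartitionVal x e := by
  induction e with
  | _ u v =>
    rw [Sym2.mk_isDiag_iff] at he
    by_cases hu : a = u
    · subst hu
      have hv : v ≠ a := fun h => he h.symm
      have : ∀ j, samePartitionVal (Function.update x a (indf j)) s(a, v) = x v j := by
        intro j
        rw [spv_mk, Function.update_self]
        rw [Function.update_of_ne hv]
        exact indf_dot j (x v)
      simp only [this, spv_mk]
    · by_cases hv : a = v
      · subst hv
        have hu' : u ≠ a := fun h => hu h.symm
        have : ∀ j, samePartitionVal (Function.update x a (indf j)) s(u, a) = x u j := by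
          intro j
          rw [spv_mk, Function.update_self, Function.update_of_ne hu']
          exact indf_dot' j (x u)
        simp only [this, spv_mk]
        exact Finset.sum_congr rfl fun j _ => mul_comm _ _
      · have : ∀ j, samePartitionVal (Function.update x a (indf j)) s(u, v)
            = samePartitionVal x s(u, v) := by
          intro j
          rw [spv_mk, spv_mk, Function.update_of_ne (fun h => hu h.symm),
            Function.update_of_ne (fun h => hv h.symm)]
        simp only [this]
        rw [← Finset.sum_mul, hsum, one_mul]

variable (E : Finset (Sym2 V)) (w : Sym2 V → ℝ)

noncomputable def fobj (x : V → Fin k → ℝ) : ℝ :=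
  ∑ e ∈ E, w e * (1 - samePartitionVal x e)

lemma fobj_decomp (hE : ∀ e ∈ E, ¬ e.IsDiag) (x : V → Fin k → ℝ) (a : V)
    (hsum : ∑ j, x a j = 1) :
    fobj E w x = ∑ j, x a j * fobj E w (Function.update x a (indf j)) := by
  unfold fobj
  rw [show (∑ j, x a j * ∑ e ∈ E, w e * (1 - samePartitionVal (Function.update x a (indf j)) e))
      = ∑ j, ∑ e ∈ E, x a j * (w e * (1 - samePartitionVal (Function.update x a (indf j)) e))
    from Finset.sum_congr rfl fun j _ => Finset.mul_sum _ _ _, Finset.sum_comm]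
  refine Finset.sum_congr rfl fun e he => ?_
  have h := spv_update x a hsum e (hE e he)
  have h2 : ∀ j, x a j * (w e * (1 - samePartitionVal (Function.update x a (indf j)) e))
      = w e * x a j - w e * (x a j * samePartitionVal (Function.update x a (indf j)) e) :=
    fun j => by ring
  rw [Finset.sum_congr rfl fun j _ => h2 j, Finset.sum_sub_distrib,
    ← Finset.mul_sum, ← Finset.mul_sum, hsum, h]
  ring


lemma round (hk : 1 ≤ k) (hE : ∀ e ∈ E, ¬ e.IsDiag) (S : Finset V) :
    ∀ x : V → Fin k → ℝ, (∀ v j, 0 ≤ x v j) → (∀ v, ∑ j, x v j = 1) →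
    (∀ v ∉ S, ∃ j, x v = indf j) →
    ∃ c : V → Fin k, fobj E w x ≤ fobj E w (fun v => indf (c v)) := by
  classical
  induction S using Finset.induction_on with
  | empty =>
    intro x hnn hsum hbin
    choose c hc using fun v => hbin v (Finset.notMem_empty v)
    refine ⟨c, le_of_eq ?_⟩
    congr 1
    funext v
    exact hc v
  | @insert a S ha ih =>
    intro x hnn hsum hbin
    haveI : Nonempty (Fin k) := ⟨⟨0, hk⟩⟩
    obtain ⟨j0, -, hj0⟩ := Finset.exists_max_image Finset.univ
      (fun j => fobj E w (Function.update x a (indf j))) ⟨Classical.arbitrary _, Finset.mem_univ _⟩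
    set x' := Function.update x a (indf j0) with hx'
    have hstep : fobj E w x ≤ fobj E w x' := by
      rw [fobj_decomp E w hE x a (hsum a)]
      calc ∑ j, x a j * fobj E w (Function.update x a (indf j))
          ≤ ∑ j, x a j * fobj E w x' := by
            refine Finset.sum_le_sum fun j _ => ?_
            exact mul_le_mul_of_nonneg_left (hj0 j (Finset.mem_univ j)) (hnn a j)
        _ = fobj E w x' := by rw [← Finset.sum_mul, hsum, one_mul]
    have hnn' : ∀ v j, 0 ≤ x' v j := by
      intro v j
      by_cases hv : v = a
      · subst hv; rw [hx', Function.update_self]; unfold indf; positivity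
      · rw [hx', Function.update_of_ne hv]; exact hnn v j
    have hsum' : ∀ v, ∑ j, x' v j = 1 := by
      intro v
      by_cases hv : v = a
      · subst hv; rw [hx', Function.update_self]; exact indf_sum j0
      · rw [hx', Function.update_of_ne hv]; exact hsum v
    have hbin' : ∀ v ∉ S, ∃ j, x' v = indf j := by
      intro v hv
      by_cases hva : v = a
      · subst hva; exact ⟨j0, by rw [hx', Function.update_self]⟩
      · rw [hx', Function.update_of_ne hva]
        exact hbin v (by simp [hva, hv])
    obtain ⟨c, hc⟩ := ih x' hnn' hsum' hbin'
    exact ⟨c, hstep.trans hc⟩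

end BqoAux


/-- The maximum of the BQO objective
`f(x) = ∑_{{u,v} ∈ E} w_{uv} (1 − ∑_j x_{uj} x_{vj})` over the continuous
relaxation `Δ = {x : 0 ≤ x_{vj} ≤ 1, ∑_j x_{vj} = 1}` is attained at a binary
point (Theorem 1): the continuous relaxation of the BQO formulation of the
max `k`-cut problem has the same optimal value as the BQO formulation. -/
theorem bqo_relaxation_attained_at_binary_point (k : ℕ) (hk : 1 ≤ k)
    (V : Type*) [Fintype V] (E : Finset (Sym2 V)) (hE : ∀ e ∈ E, ¬ e.IsDiag)
    (w : Sym2 V → ℝ) :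
    ∃ xstar : V → Fin k → ℝ,
      (∀ v j, 0 ≤ xstar v j ∧ xstar v j ≤ 1) ∧
      (∀ v, ∑ j, xstar v j = 1) ∧
      (∀ v j, xstar v j = 0 ∨ xstar v j = 1) ∧
      (∀ x : V → Fin k → ℝ,
        (∀ v j, 0 ≤ x v j ∧ x v j ≤ 1) → (∀ v, ∑ j, x v j = 1) →
        ∑ e ∈ E, w e * (1 - samePartitionVal x e) ≤
          ∑ e ∈ E, w e * (1 - samePartitionVal xstar e)) := by
  classical
  haveI : Nonempty (Fin k) := ⟨⟨0, hk⟩⟩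
  open BqoAux in
  obtain ⟨cstar, -, hcstar⟩ := Finset.exists_max_image (Finset.univ : Finset (V → Fin k))
    (fun c => fobj E w (fun v => indf (c v))) ⟨Classical.arbitrary _, Finset.mem_univ _⟩
  refine ⟨fun v => BqoAux.indf (cstar v), ?_, ?_, ?_, ?_⟩
  · intro v j
    constructor <;> · unfold BqoAux.indf; beta_reduce; split <;> norm_num
  · intro v; exact BqoAux.indf_sum _
  · intro v j
    unfold BqoAux.indf
    beta_reduce
    split
    · right; rfl
    · left; rfl
  · intro x hx hxsum
    obtain ⟨c, hc⟩ := BqoAux.round E w hk hE Finset.univ x (fun v j => (hx v j).1) hxsum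
      (fun v hv => absurd (Finset.mem_univ v) hv)
    exact hc.trans (hcstar c (Finset.mem_univ c))
end

section
/- Let k ≥ 2 and let V be a finite set with |V| > k. The projection onto the z-variables of the lifted BQO relaxation, namely { z : z_{uv} = Σ_j x_{uj} x_{vj} for some x : V → Fin k → ℝ with 0 ≤ x_{vj} ≤ 1 and Σ_j x_{vj} = 1 for each v }, is strictly contained in the E-MILO relaxation polytope { z ∈ [0,1]^{V choose 2} : z_{uv} + z_{vw} ≤ 1 + z_{uw} for all triples of distinct u, v, w, and Σ_{{u,v} ⊆ Q} z_{uv} ≥ 1 for all Q ⊆ V with |Q| = k+1 }: every z in the projection satisfies all E-MILO relaxation constraints, and there exists a point of the E-MILO relaxation polytope (namely z ≡ 2/(k(k+1))) not in the projection. -/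
open Finset

/-- Weierstrass product inequality: `1 - ∑ f ≤ ∏ (1 - f)` for `f` with values in `[0,1]`. -/
lemma emilo_weierstrass {V : Type*} [DecidableEq V] (Q : Finset V) (f : V → ℝ)
    (h0 : ∀ v ∈ Q, 0 ≤ f v) (h1 : ∀ v ∈ Q, f v ≤ 1) :
    1 - ∑ v ∈ Q, f v ≤ ∏ v ∈ Q, (1 - f v) := by
  induction Q using Finset.induction with
  | empty => simp
  | @insert a s ha ih =>
    rw [Finset.sum_insert ha, Finset.prod_insert ha]
    have hs := ih (fun v hv => h0 v (Finset.mem_insert_of_mem hv))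
      (fun v hv => h1 v (Finset.mem_insert_of_mem hv))
    have ha0 : 0 ≤ f a := h0 a (Finset.mem_insert_self a s)
    have ha1 : f a ≤ 1 := h1 a (Finset.mem_insert_self a s)
    have hsum0 : 0 ≤ ∑ v ∈ s, f v :=
      Finset.sum_nonneg fun v hv => h0 v (Finset.mem_insert_of_mem hv)
    nlinarith [hs]

/-- For `f` with values in `[0,1]`: `2 (∑ f - 1) ≤ (∑ f)² - ∑ f²`. -/
lemma emilo_pair_bound {V : Type*} [DecidableEq V] (Q : Finset V) (f : V → ℝ)
    (h0 : ∀ v ∈ Q, 0 ≤ f v) (h1 : ∀ v ∈ Q, f v ≤ 1) :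
    2 * (∑ v ∈ Q, f v - 1) ≤ (∑ v ∈ Q, f v)^2 - ∑ v ∈ Q, (f v)^2 := by
  have key : 2 * (∑ v ∈ Q, f v - 1 + ∏ v ∈ Q, (1 - f v)) ≤
      (∑ v ∈ Q, f v)^2 - ∑ v ∈ Q, (f v)^2 := by
    induction Q using Finset.induction with
    | empty => simp
    | @insert a s ha ih =>
      rw [Finset.sum_insert ha, Finset.prod_insert ha, Finset.sum_insert ha]
      have hs := ih (fun v hv => h0 v (Finset.mem_insert_of_mem hv))
        (fun v hv => h1 v (Finset.mem_insert_of_mem hv))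
      have hw := emilo_weierstrass s f (fun v hv => h0 v (Finset.mem_insert_of_mem hv))
        (fun v hv => h1 v (Finset.mem_insert_of_mem hv))
      have ha0 : 0 ≤ f a := h0 a (Finset.mem_insert_self a s)
      have ha1 : f a ≤ 1 := h1 a (Finset.mem_insert_self a s)
      nlinarith [hs, hw]
  have hp : 0 ≤ ∏ v ∈ Q, (1 - f v) :=
    Finset.prod_nonneg fun v hv => by linarith [h1 v hv]
  linarith

lemma emilo_fiber {V : Type*} [DecidableEq V] (Q : Finset V) (a b : V)
    (ha : a ∈ Q) (hb : b ∈ Q) (hab : a ≠ b) :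
    Q.offDiag.filter (fun p => s(p.1, p.2) = s(a, b)) = {(a, b), (b, a)} := by
  ext p
  obtain ⟨u, v⟩ := p
  simp only [Finset.mem_filter, Finset.mem_offDiag, Finset.mem_insert,
    Finset.mem_singleton, Prod.mk.injEq, Sym2.eq_iff]
  constructor
  · rintro ⟨⟨h1, h2, h3⟩, (⟨rfl, rfl⟩ | ⟨rfl, rfl⟩)⟩ <;> simp
  · rintro (⟨rfl, rfl⟩ | ⟨rfl, rfl⟩) <;> simp [ha, hb, hab, hab.symm]

/-- The sum over ordered off-diagonal pairs equals twice the sum over non-diagonal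
unordered pairs. -/
lemma emilo_two_mul {V : Type*} [DecidableEq V] (Q : Finset V) (z : Sym2 V → ℝ)
    [DecidablePred fun e : Sym2 V => ¬ e.IsDiag] :
    ∑ p ∈ Q.offDiag, z s(p.1, p.2) =
      2 * ∑ e ∈ Q.sym2.filter (fun e => ¬ e.IsDiag), z e := by
  rw [← Finset.sum_fiberwise_of_maps_to
    (f := fun p : V × V => z s(p.1, p.2))
    (g := fun p : V × V => s(p.1, p.2))
    (t := Q.sym2.filter fun e => ¬ e.IsDiag)
    (h := fun p hp => by
      rw [Finset.mem_offDiag] at hp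
      simp only [Finset.mem_filter, Finset.mk_mem_sym2_iff, Sym2.mk_isDiag_iff]
      exact ⟨⟨hp.1, hp.2.1⟩, hp.2.2⟩)]
  rw [Finset.mul_sum]
  refine Finset.sum_congr rfl fun e he => ?_
  induction e using Sym2.ind with
  | _ a b =>
    simp only [Finset.mem_filter, Finset.mk_mem_sym2_iff, Sym2.mk_isDiag_iff] at he
    obtain ⟨⟨ha, hb⟩, hab⟩ := he
    rw [Finset.sum_congr (emilo_fiber Q a b ha hb hab) (fun p hp => rfl)]
    rw [Finset.sum_pair (by simp [hab, Prod.ext_iff] : (a, b) ≠ (b, a))]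
    rw [show s(b, a) = s(a, b) from Sym2.eq_swap]
    ring

lemma emilo_offDiag_sum {V : Type*} [DecidableEq V] (Q : Finset V) (f : V → ℝ) :
    ∑ p ∈ Q.offDiag, f p.1 * f p.2 = (∑ v ∈ Q, f v)^2 - ∑ v ∈ Q, (f v)^2 := by
  have h1 : (∑ v ∈ Q, f v)^2 = ∑ p ∈ Q ×ˢ Q, f p.1 * f p.2 := by
    rw [sq, Finset.sum_mul_sum, Finset.sum_product]
  have h2 : ∑ p ∈ (Q ×ˢ Q).filter (fun p => p.1 = p.2), f p.1 * f p.2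
      = ∑ v ∈ Q, (f v)^2 := by
    refine Finset.sum_nbij' (fun p => p.1) (fun v => (v, v)) ?_ ?_ ?_ ?_ ?_
    · rintro ⟨u, v⟩ hp
      simp only [Finset.mem_filter, Finset.mem_product] at hp
      exact hp.1.1
    · intro v hv; simp [hv]
    · rintro ⟨u, v⟩ hp
      simp only [Finset.mem_filter, Finset.mem_product] at hp
      obtain ⟨_, rfl⟩ := hp
      rfl
    · intro v hv; rfl
    · rintro ⟨u, v⟩ hp
      simp only [Finset.mem_filter, Finset.mem_product] at hp
      obtain ⟨_, rfl⟩ := hp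
      exact (sq (f u)).symm
  have h3 : Q.offDiag = (Q ×ˢ Q).filter (fun p => ¬ p.1 = p.2) := by
    ext p; simp [Finset.mem_offDiag, and_assoc]
  rw [h3, h1, ← Finset.sum_filter_add_sum_filter_not (Q ×ˢ Q) (fun p => p.1 = p.2), h2]
  ring

/-- Theorem 2 of the paper: for `k ≥ 2` and `|V| > k`, the projection onto the
`z`-variables of the lifted BQO relaxation of the max `k`-cut problem is
strictly contained in the E-MILO relaxation polytope (every projected point
satisfies the `[0,1]` bounds, triangle and clique inequalities, and some point
of the E-MILO relaxation polytope, namely `z ≡ 2/(k(k+1))`, is not in the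
projection). -/
theorem bqo_z_projection_ssubset_emilo_relaxation (k : ℕ) (hk : 2 ≤ k)
    (V : Type*) [Fintype V] [DecidableEq V] (hV : k < Fintype.card V) :
    {z : Sym2 V → ℝ | ∃ x : V → Fin k → ℝ,
        (∀ v j, 0 ≤ x v j ∧ x v j ≤ 1) ∧
        (∀ v, ∑ j, x v j = 1) ∧
        (∀ u v : V, u ≠ v → z s(u, v) = ∑ j, x u j * x v j)} ⊂
    {z : Sym2 V → ℝ |
        (∀ u v : V, u ≠ v → 0 ≤ z s(u, v) ∧ z s(u, v) ≤ 1) ∧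
        (∀ u v w : V, u ≠ v → v ≠ w → u ≠ w →
          z s(u, v) + z s(v, w) ≤ 1 + z s(u, w)) ∧
        (∀ Q : Finset V, Q.card = k + 1 →
          1 ≤ ∑ e ∈ Q.sym2.filter (fun e => ¬ e.IsDiag), z e)} := by
  have hkR : (2:ℝ) ≤ k := by exact_mod_cast hk
  have hk0 : (0:ℝ) < k := by linarith
  -- the subset inclusion
  have hsub : {z : Sym2 V → ℝ | ∃ x : V → Fin k → ℝ,
        (∀ v j, 0 ≤ x v j ∧ x v j ≤ 1) ∧
        (∀ v, ∑ j, x v j = 1) ∧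
        (∀ u v : V, u ≠ v → z s(u, v) = ∑ j, x u j * x v j)} ⊆
      {z : Sym2 V → ℝ |
        (∀ u v : V, u ≠ v → 0 ≤ z s(u, v) ∧ z s(u, v) ≤ 1) ∧
        (∀ u v w : V, u ≠ v → v ≠ w → u ≠ w →
          z s(u, v) + z s(v, w) ≤ 1 + z s(u, w)) ∧
        (∀ Q : Finset V, Q.card = k + 1 →
          1 ≤ ∑ e ∈ Q.sym2.filter (fun e => ¬ e.IsDiag), z e)} := by
    rintro z ⟨x, hx01, hxsum, hz⟩
    refine ⟨?_, ?_, ?_⟩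
    · -- bounds
      intro u v huv
      rw [hz u v huv]
      constructor
      · exact Finset.sum_nonneg fun j _ => mul_nonneg (hx01 u j).1 (hx01 v j).1
      · calc ∑ j, x u j * x v j ≤ ∑ j, x v j :=
              Finset.sum_le_sum fun j _ => by
                nlinarith [(hx01 u j).1, (hx01 u j).2, (hx01 v j).1]
          _ = 1 := hxsum v
    · -- triangle inequalities
      intro u v w huv hvw huw
      rw [hz u v huv, hz v w hvw, hz u w huw]
      have hone : (1:ℝ) + ∑ j, x u j * x w j = ∑ j, (x v j + x u j * x w j) := by
        rw [Finset.sum_add_distrib, hxsum v]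
      rw [hone, ← Finset.sum_add_distrib]
      refine Finset.sum_le_sum fun j _ => ?_
      nlinarith [mul_nonneg (hx01 v j).1
          (mul_nonneg (sub_nonneg.mpr (hx01 u j).2) (sub_nonneg.mpr (hx01 w j).2)),
        mul_nonneg (sub_nonneg.mpr (hx01 v j).2)
          (mul_nonneg (hx01 u j).1 (hx01 w j).1)]
    · -- clique inequalities
      intro Q hQ
      have key : (2:ℝ) ≤ ∑ p ∈ Q.offDiag, z s(p.1, p.2) := by
        have hrw : ∀ p ∈ Q.offDiag, z s(p.1, p.2) = ∑ j, x p.1 j * x p.2 j :=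
          fun p hp => hz p.1 p.2 (Finset.mem_offDiag.mp hp).2.2
        rw [Finset.sum_congr rfl hrw, Finset.sum_comm]
        have hS : ∑ j : Fin k, ∑ v ∈ Q, x v j = (k:ℝ) + 1 := by
          rw [Finset.sum_comm, Finset.sum_congr rfl (fun v _ => hxsum v)]
          simp [hQ]
        have hbound : ∀ j : Fin k, 2 * ((∑ v ∈ Q, x v j) - 1) ≤
            ∑ p ∈ Q.offDiag, x p.1 j * x p.2 j := fun j => by
          rw [emilo_offDiag_sum Q (fun v => x v j)]
          exact emilo_pair_bound Q (fun v => x v j) (fun v _ => (hx01 v j).1)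
            (fun v _ => (hx01 v j).2)
        calc (2:ℝ) = ∑ j : Fin k, 2 * ((∑ v ∈ Q, x v j) - 1) := by
              rw [Finset.sum_congr rfl (fun j _ => by ring :
                ∀ j ∈ (univ : Finset (Fin k)), 2 * ((∑ v ∈ Q, x v j) - 1)
                  = 2 * (∑ v ∈ Q, x v j) - 2)]
              rw [Finset.sum_sub_distrib, ← Finset.mul_sum, hS]
              simp
              ring
          _ ≤ _ := Finset.sum_le_sum fun j _ => hbound j
      rw [emilo_two_mul] at key
      linarith
  -- the separating point
  refine (Set.ssubset_iff_of_subset hsub).mpr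
    ⟨fun _ => 2 / ((k:ℝ) * (k+1)), ⟨?_, ?_, ?_⟩, ?_⟩
  · -- bounds for the constant point
    intro u v huv
    constructor
    · positivity
    · rw [div_le_one (by positivity)]
      nlinarith
  · -- triangle inequalities for the constant point
    intro u v w huv hvw huw
    have h1 : 2 / ((k:ℝ) * (k+1)) ≤ 1 := by
      rw [div_le_one (by positivity)]
      nlinarith
    linarith
  · -- clique inequalities for the constant point
    intro Q hQ
    have h2 := emilo_two_mul Q (fun _ : Sym2 V => 2 / ((k:ℝ) * (k+1)))
    rw [Finset.sum_const, Finset.offDiag_card, hQ] at h2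
    have hcard : (k+1)*(k+1) - (k+1) = k*(k+1) := by
      have : (k+1)*(k+1) = k*(k+1) + (k+1) := by ring
      omega
    rw [hcard, nsmul_eq_mul] at h2
    have hlhs : ((k*(k+1) : ℕ) : ℝ) * (2 / ((k:ℝ) * (k+1))) = 2 := by
      push_cast
      field_simp
    rw [hlhs] at h2
    linarith
  · -- the constant point is not in the projection
    rintro ⟨x, hx01, hxsum, hz⟩
    set c : ℝ := 2 / ((k:ℝ) * (k+1)) with hc
    obtain ⟨Q, hQsub, hQcard⟩ := Finset.exists_subset_card_eq
      (show k + 1 ≤ (Finset.univ : Finset V).card by simpa using hV)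
    have hnli : ¬ LinearIndependent ℝ (fun q : ↥Q => x ↑q) := by
      intro h
      have hle := h.fintype_card_le_finrank
      rw [Module.finrank_fintype_fun_eq_card, Fintype.card_coe, hQcard,
        Fintype.card_fin] at hle
      omega
    obtain ⟨g, hgzero, q0, hq0⟩ := Fintype.not_linearIndependent_iff.mp hnli
    have hj : ∀ j : Fin k, ∑ q : ↥Q, g q * x ↑q j = 0 := fun j => by
      have h1 := congrFun hgzero j
      simpa [Finset.sum_apply] using h1
    have hgsum : ∑ q : ↥Q, g q = 0 := by
      have h1 : ∑ q : ↥Q, g q = ∑ q : ↥Q, ∑ j, g q * x ↑q j := by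
        refine Finset.sum_congr rfl fun q _ => ?_
        rw [← Finset.mul_sum, hxsum, mul_one]
      rw [h1, Finset.sum_comm]
      exact Finset.sum_eq_zero fun j _ => hj j
    have hinner : ∀ q r : ↥Q, q ≠ r → ∑ j, x ↑q j * x ↑r j = c :=
      fun q r hqr => (hz ↑q ↑r (Subtype.coe_injective.ne hqr)).symm
    have hkey : (0:ℝ) = ∑ q : ↥Q, (g q)^2 * ((∑ j, (x ↑q j)^2) - c) := by
      calc (0:ℝ)
          = ∑ j : Fin k, (∑ q : ↥Q, g q * x ↑q j) * (∑ r : ↥Q, g r * x ↑r j) := by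
            symm
            exact Finset.sum_eq_zero fun j _ => by rw [hj j, zero_mul]
        _ = ∑ j : Fin k, ∑ q : ↥Q, ∑ r : ↥Q, (g q * x ↑q j) * (g r * x ↑r j) := by
            refine Finset.sum_congr rfl fun j _ => ?_
            rw [Finset.sum_mul_sum]
        _ = ∑ q : ↥Q, ∑ r : ↥Q, (g q * g r) * ∑ j, x ↑q j * x ↑r j := by
            rw [Finset.sum_comm]
            refine Finset.sum_congr rfl fun q _ => ?_
            rw [Finset.sum_comm]
            refine Finset.sum_congr rfl fun r _ => ?_
            rw [Finset.mul_sum]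
            exact Finset.sum_congr rfl fun j _ => by ring
        _ = ∑ q : ↥Q, ∑ r : ↥Q, (g q * g r * c
              + if q = r then (g q)^2 * ((∑ j, (x ↑q j)^2) - c) else 0) := by
            refine Finset.sum_congr rfl fun q _ => Finset.sum_congr rfl fun r _ => ?_
            by_cases h : q = r
            · subst h
              have hsq : ∑ j, x ↑q j * x ↑q j = ∑ j, (x ↑q j)^2 :=
                Finset.sum_congr rfl fun j _ => (sq (x ↑q j)).symm
              rw [hsq, if_pos rfl]; ring
            · rw [hinner q r h, if_neg h, add_zero]
        _ = ∑ q : ↥Q, (g q)^2 * ((∑ j, (x ↑q j)^2) - c) := by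
            refine Finset.sum_congr rfl fun q _ => ?_
            rw [Finset.sum_add_distrib]
            have hA : ∑ r : ↥Q, g q * g r * c = 0 := by
              have h1 : ∑ r : ↥Q, g q * g r * c = (g q * c) * ∑ r : ↥Q, g r := by
                rw [Finset.mul_sum]
                exact Finset.sum_congr rfl fun r _ => by ring
              rw [h1, hgsum, mul_zero]
            rw [hA, zero_add]
            simp
    have hck : c < 1 / (k:ℝ) := by
      rw [hc, div_lt_div_iff₀ (by positivity) hk0]
      nlinarith
    have hpos : ∀ q : ↥Q, 0 < (∑ j, (x ↑q j)^2) - c := fun q => by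
      have h1 := sq_sum_le_card_mul_sum_sq (s := (univ : Finset (Fin k)))
        (f := fun j => x ↑q j)
      rw [hxsum] at h1
      simp only [Finset.card_univ, Fintype.card_fin] at h1
      have h2 : 1 / (k:ℝ) ≤ ∑ j, (x ↑q j)^2 := by
        rw [div_le_iff₀ hk0]
        calc (1:ℝ) = 1^2 := by ring
          _ ≤ (k:ℝ) * ∑ j, (x ↑q j)^2 := by exact_mod_cast h1
          _ = (∑ j, (x ↑q j)^2) * k := by ring
      linarith
    have hposs : 0 < ∑ q : ↥Q, (g q)^2 * ((∑ j, (x ↑q j)^2) - c) :=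
      Finset.sum_pos' (fun q _ => mul_nonneg (sq_nonneg _) (le_of_lt (hpos q)))
        ⟨q0, Finset.mem_univ q0, mul_pos (pow_two_pos_of_ne_zero hq0) (hpos q0)⟩
    linarith
end
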